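/- Let K be a field and let H be the free K-vector space with basis the set of all forests of planar rooted trees, endowed with the bilinear concatenation operation * and the bilinear grafting operation ≻. Then (H, *, ≻) is a Hoch-algebra: * is associative, and for all x, y, z ∈ H one has (x ≻ y) * z + (x * y) ≻ z = x ≻ (y * z) + x * (y ≻ z). -/

import Mathlib

open scoped TensorProduct

/-- Planar rooted trees: a tree is either the leaf `|`, or a grafting of at
least two planar rooted trees (`graft t₁ t₂ rest` represents `[t₁, t₂, rest…]`). -/
inductive PTree : Type
  | leaf : PTree
  | graft (t₁ t₂ : PTree) (rest : List PTree) : PTree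

/-- A forest is a nonempty word of planar rooted trees. -/
abbrev Forest : Type := {l : List PTree // l ≠ []}

/-- Grafting of a list of trees (only meaningful on lists of length ≥ 2;
on shorter lists we return a junk value, which is never used). -/
def graftList : List PTree → PTree
  | [] => .leaf
  | [a] => a
  | a :: b :: rest => .graft a b rest

mutual
/-- Number of leaves of a planar rooted tree. -/
def leavesT : PTree → ℕ
  | .leaf => 1
  | .graft a b rest => leavesT a + leavesT b + leavesL rest

/-- Sum of the numbers of leaves of a list of trees. -/
def leavesL : List PTree → ℕ
  | [] => 0
  | t :: ts => leavesT t + leavesL ts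
end

/-- Number of leaves of a forest. -/
def leavesF (w : Forest) : ℕ := leavesL w.1

variable (K : Type*) [Field K]

/-- `H K` is the free `K`-vector space with basis the set of forests of
planar rooted trees. -/
abbrev H : Type _ := Forest →₀ K

/-- The leaf, as a (one-tree) forest. -/
def leafF : Forest := ⟨[PTree.leaf], by simp⟩

/-- The concatenation product `*`, as a bilinear map on `H K`;
on basis forests it is concatenation of words. -/
noncomputable def mulH : H K →ₗ[K] H K →ₗ[K] H K :=
  Finsupp.lift (H K →ₗ[K] H K) K Forest fun x =>
    Finsupp.lift (H K) K Forest fun y =>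
      Finsupp.single ⟨x.1 ++ y.1, by simp [x.2]⟩ 1

/-- The grafting operation `≻` on two basis forests:
`(t₁…tₚ) ≻ (s₁…s_q) = Σ_{k=1}^{q} Σ_{i=0}^{p−1}
t₁…t_{p−(i+1)} [t_{p−i},…,tₚ, s₁,…,s_k] s_{k+1}…s_q`. -/
noncomputable def succForest (x y : Forest) : H K :=
  ∑ k ∈ Finset.range y.1.length, ∑ i ∈ Finset.range x.1.length,
    Finsupp.single
      ⟨x.1.take (x.1.length - (i + 1)) ++
        (graftList (x.1.drop (x.1.length - (i + 1)) ++ y.1.take (k + 1)) :: y.1.drop (k + 1)),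
        by simp⟩ 1

/-- The operation `≻`, as a bilinear map on `H K`. -/
noncomputable def succH : H K →ₗ[K] H K →ₗ[K] H K :=
  Finsupp.lift (H K →ₗ[K] H K) K Forest fun x =>
    Finsupp.lift (H K) K Forest fun y => succForest K x y

/-!
On basis forests `x, y, z`, the terms of `(x y) ≻ z` split according to whether the grafted
block of trailing trees of `x y` lies inside `y`, which gives `x * (y ≻ z)`, or contains all
of `y`. Likewise the terms of `x ≻ (y z)` split according to whether the grafted block of
leading trees of `y z` lies inside `y`, which gives `(x ≻ y) * z`, or contains all of `y`.
The two families of terms containing all of `y` coincide, and this is the cocycle relation.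
-/

/-- The term of `a ≻ b` in which the last `i + 1` trees of `a` and the first `k + 1` trees
of `b` are grafted onto a new root. -/
def graftAt (a b : List PTree) (i k : ℕ) : List PTree :=
  a.take (a.length - (i + 1)) ++
    graftList (a.drop (a.length - (i + 1)) ++ b.take (k + 1)) :: b.drop (k + 1)

lemma graftAt_append_right {b : List PTree} {k : ℕ} (hk : k < b.length) (a c : List PTree)
    (i : ℕ) : graftAt a b i k ++ c = graftAt a (b ++ c) i k := by
  simp [graftAt, List.take_append_of_le_length hk, List.drop_append_of_le_length hk]

lemma graftAt_append_left {b : List PTree} {i : ℕ} (hi : i < b.length) (a c : List PTree)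
    (k : ℕ) : graftAt (a ++ b) c i k = a ++ graftAt b c i k := by
  have hlen : (a ++ b).length - (i + 1) = a.length + (b.length - (i + 1)) := by
    simp only [List.length_append]; omega
  simp only [graftAt, hlen, List.take_length_add_append, List.drop_length_add_append,
    List.append_assoc]

lemma graftAt_append_add {a : List PTree} {i : ℕ} (hi : i < a.length) (b c : List PTree)
    (k : ℕ) : graftAt (a ++ b) c (b.length + i) k = graftAt a (b ++ c) i (b.length + k) := by
  have hlen : (a ++ b).length - (b.length + i + 1) = a.length - (i + 1) := by
    simp only [List.length_append]; omega
  have hle : a.length - (i + 1) ≤ a.length := Nat.sub_le _ _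
  have hk : b.length + k + 1 = b.length + (k + 1) := by omega
  simp only [graftAt, hlen, hk, List.take_append_of_le_length hle,
    List.drop_append_of_le_length hle, List.take_length_add_append, List.drop_length_add_append,
    List.append_assoc]

instance : Append Forest := ⟨fun x y => ⟨x.1 ++ y.1, by simp [x.2]⟩⟩

@[simp] lemma Forest.val_append (x y : Forest) : (x ++ y).1 = x.1 ++ y.1 := rfl

lemma Forest.append_assoc (x y z : Forest) : x ++ y ++ z = x ++ (y ++ z) :=
  Subtype.ext (List.append_assoc _ _ _)

def graftForest (a b : List PTree) (i k : ℕ) : Forest := ⟨graftAt a b i k, by simp [graftAt]⟩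

lemma mulH_single_single (x y : Forest) :
    mulH K (Finsupp.single x 1) (Finsupp.single y 1) = Finsupp.single (x ++ y) 1 := by
  simp [mulH]
  rfl

lemma succH_single_single (x y : Forest) :
    succH K (Finsupp.single x 1) (Finsupp.single y 1) = succForest K x y := by
  simp [succH]

lemma succForest_eq_sum (x y : Forest) :
    succForest K x y = ∑ k ∈ Finset.range y.1.length, ∑ i ∈ Finset.range x.1.length,
      Finsupp.single (graftForest x.1 y.1 i k) 1 := rfl

/-- The terms of `(x y) ≻ z`, equivalently of `x ≻ (y z)`, in which all of `y` is grafted. -/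
noncomputable def graftThrough (x y z : Forest) : H K :=
  ∑ k ∈ Finset.range z.1.length, ∑ i ∈ Finset.range x.1.length,
    Finsupp.single (graftForest x.1 (y.1 ++ z.1) i (y.1.length + k)) 1

lemma succForest_append_left (x y z : Forest) :
    succForest K (x ++ y) z =
      mulH K (Finsupp.single x 1) (succForest K y z) + graftThrough K x y z := by
  rw [succForest_eq_sum, succForest_eq_sum, graftThrough, map_sum, ← Finset.sum_add_distrib]
  refine Finset.sum_congr rfl fun k _ => ?_
  rw [Forest.val_append, List.length_append, add_comm, Finset.sum_range_add, map_sum]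
  congr 1
  · refine Finset.sum_congr rfl fun i hi => ?_
    rw [mulH_single_single]
    congr 1
    exact Subtype.ext (graftAt_append_left (Finset.mem_range.mp hi) _ _ _)
  · refine Finset.sum_congr rfl fun i hi => ?_
    congr 1
    exact Subtype.ext (graftAt_append_add (Finset.mem_range.mp hi) _ _ _)

lemma succForest_append_right (x y z : Forest) :
    succForest K x (y ++ z) =
      mulH K (succForest K x y) (Finsupp.single z 1) + graftThrough K x y z := by
  rw [succForest_eq_sum, succForest_eq_sum, graftThrough, Forest.val_append, List.length_append,
    Finset.sum_range_add, map_sum, LinearMap.sum_apply]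
  congr 1
  refine Finset.sum_congr rfl fun k hk => ?_
  rw [map_sum, LinearMap.sum_apply]
  refine Finset.sum_congr rfl fun i _ => ?_
  rw [mulH_single_single]
  congr 1
  exact Subtype.ext (graftAt_append_right (Finset.mem_range.mp hk) _ _ _).symm

lemma mulH_assoc (x y z : H K) : mulH K (mulH K x y) z = mulH K x (mulH K y z) := by
  suffices h : (mulH K).compr₂ (mulH K) =
      (LinearMap.llcomp K _ _ _ ∘ₗ mulH K).compl₂ (mulH K) from
    LinearMap.congr_fun (LinearMap.congr_fun₂ h x y) z
  ext a b c : 6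
  simp [mulH_single_single, Forest.append_assoc]

lemma mulH_succH_cocycle (x y z : H K) :
    mulH K (succH K x y) z + succH K (mulH K x y) z
      = succH K x (mulH K y z) + mulH K x (succH K y z) := by
  suffices h : (succH K).compr₂ (mulH K) + (mulH K).compr₂ (succH K) =
      (LinearMap.llcomp K _ _ _ ∘ₗ succH K).compl₂ (mulH K) +
        (LinearMap.llcomp K _ _ _ ∘ₗ mulH K).compl₂ (succH K) from
    LinearMap.congr_fun (LinearMap.congr_fun₂ h x y) z
  ext a b c : 6
  simp only [LinearMap.add_apply, LinearMap.compr₂_apply, LinearMap.compl₂_apply,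
    LinearMap.coe_comp, Function.comp_apply, LinearMap.llcomp_apply, Finsupp.lsingle_apply,
    mulH_single_single, succH_single_single]
  rw [succForest_append_left, succForest_append_right]
  abel

/-- `(H, *, ≻)` is a Hoch-algebra: the concatenation product is
associative and together with the grafting operation `≻` it satisfies the
Hochschild two-cocycle relation. -/
theorem stmt0 (K : Type*) [Field K] :
    (∀ x y z : H K, mulH K (mulH K x y) z = mulH K x (mulH K y z)) ∧
    (∀ x y z : H K,
      mulH K (succH K x y) z + succH K (mulH K x y) z
        = succH K x (mulH K y z) + mulH K x (succH K y z)) :=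
  ⟨mulH_assoc K, mulH_succH_cocycle K⟩
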